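/- arXiv:1506.05878 — 6 statements merged into one kernel-verified Lean document; each statement's English description precedes it below -/
import Mathlib

section
/- In the commutative ring R = ℤ[h,E]/⟨h⁴, h²E, E² − 2hE + h²⟩ (the quotient of the polynomial ring ℤ[h,E] in two variables by the ideal generated by h⁴, h²E, and E² − 2hE + h²), the element hE does not belong to the ideal of R generated by h³. -/
/-- The element `h` in `ℤ[h,E]`. -/
noncomputable def hGen : MvPolynomial (Fin 2) ℤ := MvPolynomial.X 0

/-- The element `E` in `ℤ[h,E]`. -/
noncomputable def EGen : MvPolynomial (Fin 2) ℤ := MvPolynomial.X 1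

/-- The ideal `⟨h⁴, h²E, E² − 2hE + h²⟩` of `ℤ[h,E]`. -/
noncomputable def relIdeal : Ideal (MvPolynomial (Fin 2) ℤ) :=
  Ideal.span {hGen ^ 4, hGen ^ 2 * EGen, EGen ^ 2 - 2 * hGen * EGen + hGen ^ 2}

/-! The point `h = E = 2` of `ZMod 8` satisfies all three relations, so evaluation there factors
through `R`. Membership of `hE` in `(h³)` would then give `2³ ∣ 2 · 2` in `ZMod 8`, i.e. `0 ∣ 4`,
which is false. -/

theorem Ideal.Quotient.map_dvd_map_of_mk_dvd_mk {A S : Type*} [CommRing A] [CommRing S]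
    {I : Ideal A} (φ : A →+* S) (hI : I ≤ RingHom.ker φ) {a b : A}
    (h : Ideal.Quotient.mk I b ∣ Ideal.Quotient.mk I a) : φ b ∣ φ a :=
  map_dvd (Ideal.Quotient.lift I φ hI) h

theorem relIdeal_le_ker_eval₂Hom {S : Type*} [CommRing S] {x y : S} (hx : x ^ 4 = 0)
    (hxy : x ^ 2 * y = 0) (hyx : (y - x) ^ 2 = 0) :
    relIdeal ≤ RingHom.ker (MvPolynomial.eval₂Hom (Int.castRingHom S) ![x, y]) := by
  simp only [relIdeal, Ideal.span_le, Set.insert_subset_iff, Set.singleton_subset_iff,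
    SetLike.mem_coe, RingHom.mem_ker]
  refine ⟨by simpa [hGen] using hx, by simpa [hGen, EGen] using hxy, ?_⟩
  simp only [hGen, EGen, map_add, map_sub, map_mul, map_pow, map_ofNat, MvPolynomial.eval₂Hom_X',
    Matrix.cons_val_zero, Matrix.cons_val_one]
  linear_combination hyx

/-- In `R = ℤ[h,E]/⟨h⁴, h²E, E² − 2hE + h²⟩`, the element `hE` does not belong to
the ideal of `R` generated by `h³`. -/
theorem hE_not_in_span_h_cubed :
    Ideal.Quotient.mk relIdeal (hGen * EGen) ∉
      Ideal.span {Ideal.Quotient.mk relIdeal (hGen ^ 3)} := by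
  intro hmem
  have hdvd := Ideal.Quotient.map_dvd_map_of_mk_dvd_mk _
    (relIdeal_le_ker_eval₂Hom (x := (2 : ZMod 8)) (y := 2) (by decide) (by decide) (by decide))
    (Ideal.mem_span_singleton.mp hmem)
  simp only [hGen, EGen, map_mul, map_pow, MvPolynomial.eval₂Hom_X'] at hdvd
  revert hdvd
  decide
end

section
/- Let A be a commutative ring, let J_V, J_Z, J_{ZV} be ideals of A with J_V ⊆ J_{ZV} and J_Z ⊆ J_{ZV}, and let P ∈ A[t] be a polynomial. Set R = A[E]/I_R, where I_R is the ideal of the polynomial ring A[E] generated by {a·E : a ∈ J_Z} together with P(−E), and set S = (A/J_V)[E]/I_S, where I_S is the ideal of (A/J_V)[E] generated by {ā·E : ā the image in A/J_V of some a ∈ J_{ZV}} together with P̄(−E), P̄ denoting the image of P under the coefficient map A[t] → (A/J_V)[t]. Then the coefficient-reduction homomorphism A[E] → (A/J_V)[E] (sending E to E) descends to a surjective ring homomorphism R → S, and the kernel of this homomorphism is the ideal of R generated by the image of J_V together with the images of the elements {a·E : a ∈ J_{ZV}}. -/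
/-!
The reduction map `f : A[E] → (A/J_V)[E]` is surjective with kernel `J_V·A[E]`, and it carries the
ideal `K = ⟨J_{ZV}·E, P(-E)⟩ ⊇ I_R` onto `I_S`. Hence `R → S` is the map induced on quotients
by `f`, and its kernel is the image in `R` of `f⁻¹(I_S) = K + J_V·A[E]`; modulo `I_R` the
generator `P(-E)` of `K` vanishes.
-/

open Polynomial

namespace Ideal

variable {R S : Type*} [CommRing R] [CommRing S]

theorem ker_quotientMap_map_of_surjective {f : R →+* S} (hf : Function.Surjective f)
    {I K : Ideal R} (hIK : I ≤ K) :
    RingHom.ker (quotientMap (K.map f) f (hIK.trans le_comap_map)) =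
      (K ⊔ RingHom.ker f).map (Quotient.mk I) := by
  rw [← map_comap_of_surjective _ Quotient.mk_surjective (RingHom.ker _), RingHom.comap_ker,
    quotientMap_comp_mk, ← RingHom.comap_ker, mk_ker, comap_map_of_surjective' f hf]

end Ideal

namespace Polynomial

variable {A B : Type*} [CommRing A] [CommRing B]

/-- The relations `s·E` and `P(-E)` of Keel's presentation of the Chow ring of a blow-up. -/
def keelRelations (s : Set A) (P : A[X]) : Set A[X] :=
  {q | ∃ a ∈ s, q = C a * X} ∪ {P.comp (-X)}

theorem keelRelations_mono {s t : Set A} (hst : s ⊆ t) (P : A[X]) :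
    keelRelations s P ⊆ keelRelations t P :=
  Set.union_subset_union_left _ fun _ ⟨a, ha, hq⟩ => ⟨a, hst ha, hq⟩

theorem image_mapRingHom_keelRelations (g : A →+* B) (s : Set A) (P : A[X]) :
    mapRingHom g '' keelRelations s P = keelRelations (g '' s) (P.map g) := by
  ext q
  simp [keelRelations, Polynomial.map_comp, eq_comm]

theorem map_mk_span_keelRelations_sup_map_C {I : Ideal A[X]} {s : Set A} {P : A[X]}
    (J : Ideal A) (hP : P.comp (-X) ∈ I) :
    (Ideal.span (keelRelations s P) ⊔ J.map C).map (Ideal.Quotient.mk I) =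
      Ideal.span ({x | ∃ a ∈ J, x = Ideal.Quotient.mk I (C a)} ∪
        {x | ∃ a ∈ s, x = Ideal.Quotient.mk I (C a * X)}) := by
  rw [Ideal.map_sup, Ideal.map_span, Ideal.map_map, Ideal.map, keelRelations, Set.image_union,
    Ideal.span_union, Set.image_singleton, Ideal.Quotient.eq_zero_iff_mem.mpr hP,
    Ideal.span_singleton_zero, sup_bot_eq, sup_comm, Ideal.span_union]
  congr 2 <;> ext x <;> simp [eq_comm]

end Polynomial

theorem corrected_lemma_5_4_general (A : Type*) [CommRing A]
    (JV JZ JZV : Ideal A) (hZ : JZ ≤ JZV) (P : Polynomial A)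
    (IR : Ideal (Polynomial A))
    (hIR : IR = Ideal.span
      ({q : Polynomial A | ∃ a ∈ JZ, q = C a * X} ∪ {P.comp (-X)}))
    (IS : Ideal (Polynomial (A ⧸ JV)))
    (hIS : IS = Ideal.span
      ({q : Polynomial (A ⧸ JV) | ∃ a ∈ JZV, q = C (Ideal.Quotient.mk JV a) * X} ∪
        {(P.map (Ideal.Quotient.mk JV)).comp (-X)})) :
    ∃ φ : (Polynomial A ⧸ IR) →+* (Polynomial (A ⧸ JV) ⧸ IS),
      (∀ q : Polynomial A,
          φ (Ideal.Quotient.mk IR q) =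
            Ideal.Quotient.mk IS (q.map (Ideal.Quotient.mk JV))) ∧
      Function.Surjective φ ∧
      RingHom.ker φ = Ideal.span
        ({x : Polynomial A ⧸ IR | ∃ a ∈ JV, x = Ideal.Quotient.mk IR (C a)} ∪
          {x : Polynomial A ⧸ IR | ∃ a ∈ JZV, x = Ideal.Quotient.mk IR (C a * X)}) := by
  set f := mapRingHom (Ideal.Quotient.mk JV)
  have hf : Function.Surjective f := map_surjective _ Ideal.Quotient.mk_surjective
  set K := Ideal.span (keelRelations (JZV : Set A) P)
  have hIK : IR ≤ K := hIR ▸ Ideal.span_mono (keelRelations_mono hZ P)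
  obtain rfl : IS = K.map f := by
    rw [hIS, Ideal.map_span, image_mapRingHom_keelRelations, keelRelations]
    simp only [Set.mem_image, SetLike.mem_coe, exists_exists_and_eq_and]
  refine ⟨Ideal.quotientMap _ f (hIK.trans Ideal.le_comap_map), fun q => Ideal.quotientMap_mk,
    Ideal.quotientMap_surjective hf, ?_⟩
  have hP : P.comp (-X) ∈ IR := hIR ▸ Ideal.subset_span (Or.inr rfl)
  rw [Ideal.ker_quotientMap_map_of_surjective hf hIK, ker_mapRingHom, Ideal.mk_ker,
    map_mk_span_keelRelations_sup_map_C JV hP]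
  rfl

/-- Corrected Lemma 5.4 (Fulton–MacPherson), ring-theoretic form.
Let `A` be a commutative ring, `J_V ⊆ J_{ZV}` and `J_Z ⊆ J_{ZV}` ideals of `A`,
and `P ∈ A[t]`.  Let `R = A[E]/⟨{a·E : a ∈ J_Z}, P(−E)⟩` and
`S = (A/J_V)[E]/⟨{ā·E : a ∈ J_{ZV}}, P̄(−E)⟩`.  Then the coefficient-reduction
map `A[E] → (A/J_V)[E]` descends to a surjective ring homomorphism `R → S`, whose
kernel is the ideal of `R` generated by the image of `J_V` together with the
images of the elements `{a·E : a ∈ J_{ZV}}`. -/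
theorem corrected_lemma_5_4 (A : Type*) [CommRing A]
    (JV JZ JZV : Ideal A) (hV : JV ≤ JZV) (hZ : JZ ≤ JZV) (P : Polynomial A)
    (IR : Ideal (Polynomial A))
    (hIR : IR = Ideal.span
      ({q : Polynomial A | ∃ a ∈ JZ, q = C a * X} ∪ {P.comp (-X)}))
    (IS : Ideal (Polynomial (A ⧸ JV)))
    (hIS : IS = Ideal.span
      ({q : Polynomial (A ⧸ JV) | ∃ a ∈ JZV, q = C (Ideal.Quotient.mk JV a) * X} ∪
        {(P.map (Ideal.Quotient.mk JV)).comp (-X)})) :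
    ∃ φ : (Polynomial A ⧸ IR) →+* (Polynomial (A ⧸ JV) ⧸ IS),
      (∀ q : Polynomial A,
          φ (Ideal.Quotient.mk IR q) =
            Ideal.Quotient.mk IS (q.map (Ideal.Quotient.mk JV))) ∧
      Function.Surjective φ ∧
      RingHom.ker φ = Ideal.span
        ({x : Polynomial A ⧸ IR | ∃ a ∈ JV, x = Ideal.Quotient.mk IR (C a)} ∪
          {x : Polynomial A ⧸ IR | ∃ a ∈ JZV, x = Ideal.Quotient.mk IR (C a * X)}) :=
  corrected_lemma_5_4_general A JV JZ JZV hZ P IR hIR IS hIS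
end

section
/- Let A be a commutative ring, let J_V, J_Z, J_{ZV} be ideals of A with J_V ⊆ J_{ZV} and J_Z ⊆ J_{ZV}, and let P ∈ A[t] be a polynomial. Set R = A[E]/I_R, where I_R is the ideal of the polynomial ring A[E] generated by {a·E : a ∈ J_Z} together with P(−E), and set S = (A/J_V)[E]/I_S, where I_S is the ideal of (A/J_V)[E] generated by {ā·E : ā the image in A/J_V of some a ∈ J_{ZV}} together with P̄(−E), P̄ denoting the image of P under the coefficient map A[t] → (A/J_V)[t]. If moreover J_{ZV} = A, then the kernel of the induced surjective homomorphism R → S is the ideal of R generated by the image of J_V together with the image of E. -/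
/-!
Because `J_{ZV} = A`, the relations `a • E` of `S` include `E` itself. Reduction modulo `J_V`
is surjective on polynomial rings with kernel `J_V[E]`, so the preimage of `I_S` in `A[E]` is
generated by `J_V`, all the `a • E` and `P(-E)`. This contains `I_R`, and modulo `I_R` it is
generated by `J_V` and `E` alone, since `P(-E)` already vanishes in `R`.
-/

open Polynomial

namespace Ideal

theorem ker_quotientMap {R S : Type*} [CommRing R] [CommRing S] {I : Ideal R} (J : Ideal S)
    (f : R →+* S) (hIJ : I ≤ J.comap f) :
    RingHom.ker (quotientMap J f hIJ) = (J.comap f).map (Quotient.mk I) := by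
  refine (ker_quotient_lift ((Quotient.mk J).comp f) _).trans ?_
  rw [← RingHom.comap_ker, mk_ker]

end Ideal

section ExceptionalRelations

variable {A B : Type*} [CommRing A] [CommRing B]

/-- The relations `{a • E : a ∈ J} ∪ {P(-E)}` defining `R` and `S`, with `X` standing for `E`. -/
def exceptionalRelations (J : Ideal A) (P : A[X]) : Set A[X] :=
  {q | ∃ a ∈ J, q = C a * X} ∪ {P.comp (-X)}

theorem exceptionalRelations_mono {J J' : Ideal A} (h : J ≤ J') (P : A[X]) :
    exceptionalRelations J P ⊆ exceptionalRelations J' P :=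
  Set.union_subset_union_left _ fun _ ⟨a, ha, hq⟩ => ⟨a, h ha, hq⟩

theorem image_mapRingHom_exceptionalRelations (f : A →+* B) (J : Ideal A) (P : A[X]) :
    mapRingHom f '' exceptionalRelations J P =
      {q | ∃ a ∈ J, q = C (f a) * X} ∪ {(P.map f).comp (-X)} := by
  simp only [exceptionalRelations, Set.image_union, Set.image_singleton, coe_mapRingHom,
    Polynomial.map_comp, Polynomial.map_neg, map_X]
  congr 1
  ext q
  simp [eq_comm]

theorem map_span_exceptionalRelations_top (I : Ideal A[X]) (P : A[X]) (hP : P.comp (-X) ∈ I) :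
    (Ideal.span (exceptionalRelations ⊤ P)).map (Ideal.Quotient.mk I) =
      Ideal.span {Ideal.Quotient.mk I X} := by
  rw [Ideal.map_span]
  apply le_antisymm
  · rw [Ideal.span_le]
    rintro _ ⟨q, ⟨a, -, rfl⟩ | rfl, rfl⟩
    · rw [map_mul]
      exact Ideal.mul_mem_left _ _ (Ideal.subset_span rfl)
    · rw [Ideal.Quotient.eq_zero_iff_mem.mpr hP]
      exact zero_mem _
  · rw [Ideal.span_singleton_le_iff_mem]
    exact Ideal.subset_span ⟨C 1 * X, Or.inl ⟨1, trivial, rfl⟩, by rw [C_1, one_mul]⟩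

theorem comap_mapRingHom_span_image (J : Ideal A) (s : Set A[X]) :
    (Ideal.span (mapRingHom (Ideal.Quotient.mk J) '' s)).comap
        (mapRingHom (Ideal.Quotient.mk J)) = Ideal.span s ⊔ J.map C := by
  rw [← Ideal.map_span, Ideal.comap_map_of_surjective' _
    (map_surjective _ Ideal.Quotient.mk_surjective), ker_mapRingHom, Ideal.mk_ker]

end ExceptionalRelations

theorem corrected_lemma_5_4_empty_intersection_general (A : Type*) [CommRing A]
    (JV JZ JZV : Ideal A) (P : Polynomial A)
    (hZV : JZV = ⊤)
    (IR : Ideal (Polynomial A))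
    (hIR : IR = Ideal.span
      ({q : Polynomial A | ∃ a ∈ JZ, q = C a * X} ∪ {P.comp (-X)}))
    (IS : Ideal (Polynomial (A ⧸ JV)))
    (hIS : IS = Ideal.span
      ({q : Polynomial (A ⧸ JV) | ∃ a ∈ JZV, q = C (Ideal.Quotient.mk JV a) * X} ∪
        {(P.map (Ideal.Quotient.mk JV)).comp (-X)})) :
    ∃ φ : (Polynomial A ⧸ IR) →+* (Polynomial (A ⧸ JV) ⧸ IS),
      (∀ q : Polynomial A,
          φ (Ideal.Quotient.mk IR q) =
            Ideal.Quotient.mk IS (q.map (Ideal.Quotient.mk JV))) ∧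
      Function.Surjective φ ∧
      RingHom.ker φ = Ideal.span
        ({x : Polynomial A ⧸ IR | ∃ a ∈ JV, x = Ideal.Quotient.mk IR (C a)} ∪
          {Ideal.Quotient.mk IR X}) := by
  subst hZV
  rw [← image_mapRingHom_exceptionalRelations] at hIS
  have hcomap : IS.comap (mapRingHom (Ideal.Quotient.mk JV)) =
      Ideal.span (exceptionalRelations ⊤ P) ⊔ JV.map C := by
    rw [hIS, comap_mapRingHom_span_image]
  have hIR_le : IR ≤ IS.comap (mapRingHom (Ideal.Quotient.mk JV)) := by
    rw [hcomap, hIR]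
    exact le_sup_of_le_left (Ideal.span_mono (exceptionalRelations_mono le_top P))
  refine ⟨Ideal.quotientMap IS _ hIR_le, fun _ => rfl,
    Ideal.quotientMap_surjective (map_surjective _ Ideal.Quotient.mk_surjective), ?_⟩
  have hP : P.comp (-X) ∈ IR := hIR ▸ Ideal.subset_span (Or.inr rfl)
  rw [Ideal.ker_quotientMap, hcomap, Ideal.map_sup, map_span_exceptionalRelations_top IR P hP,
    Ideal.span_union, sup_comm, Ideal.map_map, Ideal.map]
  congr 2
  ext x
  simp [eq_comm]

/-- The empty-intersection case of the corrected Lemma 5.4 (Fulton–MacPherson):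
with the notation of the corrected lemma, if moreover `J_{ZV} = A`, then the kernel
of the induced surjective homomorphism `R → S` is the ideal of `R` generated by the
image of `J_V` together with the image of `E`. -/
theorem corrected_lemma_5_4_empty_intersection (A : Type*) [CommRing A]
    (JV JZ JZV : Ideal A) (hV : JV ≤ JZV) (hZ : JZ ≤ JZV) (P : Polynomial A)
    (hZV : JZV = ⊤)
    (IR : Ideal (Polynomial A))
    (hIR : IR = Ideal.span
      ({q : Polynomial A | ∃ a ∈ JZ, q = C a * X} ∪ {P.comp (-X)}))
    (IS : Ideal (Polynomial (A ⧸ JV)))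
    (hIS : IS = Ideal.span
      ({q : Polynomial (A ⧸ JV) | ∃ a ∈ JZV, q = C (Ideal.Quotient.mk JV a) * X} ∪
        {(P.map (Ideal.Quotient.mk JV)).comp (-X)})) :
    ∃ φ : (Polynomial A ⧸ IR) →+* (Polynomial (A ⧸ JV) ⧸ IS),
      (∀ q : Polynomial A,
          φ (Ideal.Quotient.mk IR q) =
            Ideal.Quotient.mk IS (q.map (Ideal.Quotient.mk JV))) ∧
      Function.Surjective φ ∧
      RingHom.ker φ = Ideal.span
        ({x : Polynomial A ⧸ IR | ∃ a ∈ JV, x = Ideal.Quotient.mk IR (C a)} ∪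
          {Ideal.Quotient.mk IR X}) :=
  corrected_lemma_5_4_empty_intersection_general A JV JZ JZV P hZV IR hIR IS hIS
end

section
/- With the setup of the context (commutative ring R, elements D_S for all S ⊆ {1,…,n} with |S| ≥ 2 satisfying relation (1), polynomials c_{ij} ∈ R[t] satisfying relation (3)): for every subset S ⊆ {1,…,n} with |S| = k ≥ 2 and every enumeration i₁, …, i_k of the elements of S, one has ∏_{m=1}^{k−1} c_{i_m i_{m+1}}(Σ_{V ⊇ S} D_V) = 0 in R, where the sum Σ_{V ⊇ S} D_V runs over all subsets V ⊆ {1,…,n} with |V| ≥ 2 containing S. -/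
/-!
Put `x = Σ_{V ⊇ S} D_V` and, for `i, j ∈ S`, let `e_{ij} = Σ D_V` over the sets `V ∋ i, j` with
`S ⊄ V`. Then `Σ_{V ∋ i,j} D_V = x + e_{ij}` is a root of `c_{ij}`, so `e_{ij}` divides
`c_{ij}(x)`, and it suffices to show that `∏_m e_{i_m i_{m+1}} = 0`. Expanding, every term is a
product `D_{V_1} ⋯ D_{V_{k-1}}` in which consecutive sets meet. By relation (1) a nonzero such
product has nested consecutive factors, so the largest set seen so far absorbs the next one; at
the end this largest set contains all of `S`, which no `V_m` does.
-/

open Finset Polynomial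

section General

variable {α R : Type*}

/-- `pathProd f [i₁, …, i_k] = ∏_{m<k} f i_m i_{m+1}`; the paper's `c_S` is `pathProd c`. -/
def pathProd [CommMonoid R] (f : α → α → R) (l : List α) : R :=
  ((l.zip l.tail).map fun p => f p.1 p.2).prod

section pathProd

variable [CommMonoid R] (f : α → α → R)

@[simp]
theorem pathProd_nil : pathProd f [] = 1 := rfl

@[simp]
theorem pathProd_singleton (a : α) : pathProd f [a] = 1 := rfl

@[simp]
theorem pathProd_cons_cons (a b : α) (l : List α) :
    pathProd f (a :: b :: l) = f a b * pathProd f (b :: l) := by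
  simp [pathProd]

theorem pathProd_dvd_pathProd {f g : α → α → R} {l : List α}
    (h : l.IsChain fun i j => f i j ∣ g i j) : pathProd f l ∣ pathProd g l := by
  induction h with
  | nil => simp
  | singleton => simp
  | cons_cons hab _ ih => simpa using mul_dvd_mul hab ih

end pathProd

theorem Polynomial.sub_dvd_eval_of_eval_eq_zero [CommRing R] {p : R[X]} {x y : R}
    (hy : p.eval y = 0) : y - x ∣ p.eval x := by
  simpa [hy] using sub_dvd_eval_sub y x p

section Overlap

variable [DecidableEq α] [CommSemiring R] {D : Finset α → R}
  (hD : ∀ S T : Finset α, 2 ≤ #S → 2 ≤ #T →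
    S ∩ T ≠ ∅ → S ∩ T ≠ S → S ∩ T ≠ T → D S * D T = 0)
  {S : Finset α} {F : α → α → Finset (Finset α)}
  (hF : ∀ i j, ∀ V ∈ F i j, 2 ≤ #V ∧ i ∈ V ∧ j ∈ V ∧ ¬ S ⊆ V)
include hD hF

/-- `W` is the largest set met so far along the path; it meets the next set in `a`. -/
theorem mul_pathProd_sum_eq_zero (l : List α) (a : α) (W : Finset α) (hW : 2 ≤ #W)
    (ha : a ∈ W) (hSW : ¬ S ⊆ W) (hS : S ⊆ W ∪ l.toFinset) :
    D W * pathProd (fun i j => ∑ V ∈ F i j, D V) (a :: l) = 0 := by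
  induction l generalizing a W with
  | nil => exact absurd (by simpa using hS) hSW
  | cons b t ih =>
    rw [pathProd_cons_cons, ← mul_assoc, mul_sum, sum_mul]
    refine sum_eq_zero fun V hV => ?_
    obtain ⟨hV, haV, hbV, hSV⟩ := hF a b V hV
    have hcover : ∀ U, W ⊆ U → b ∈ U → S ⊆ U ∪ t.toFinset := by
      intro U hWU hbU x hx
      have := hS hx
      simp only [List.toFinset_cons, mem_union, mem_insert, List.mem_toFinset] at this ⊢
      grind
    by_cases hWV : W ⊆ V
    · rw [mul_assoc, ih b V hV hbV hSV (hcover V hWV hbV), mul_zero]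
    by_cases hVW : V ⊆ W
    · rw [mul_right_comm, ih b W hW (hVW hbV) hSW (hcover W subset_rfl (hVW hbV)), zero_mul]
    have hWV0 : D W * D V = 0 :=
      hD W V hW hV (ne_empty_of_mem (mem_inter.2 ⟨ha, haV⟩))
        (fun h => hWV (inter_eq_left.1 h)) (fun h => hVW (inter_eq_right.1 h))
    rw [hWV0, zero_mul]

theorem pathProd_sum_eq_zero {l : List α} (hS : 2 ≤ #S) (hl : S ⊆ l.toFinset) :
    pathProd (fun i j => ∑ V ∈ F i j, D V) l = 0 := by
  rcases l with _ | ⟨a, _ | ⟨b, t⟩⟩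
  iterate 2
    · have := hS.trans ((card_le_card hl).trans (List.toFinset_card_le _))
      simp at this
  rw [pathProd_cons_cons, sum_mul]
  refine sum_eq_zero fun V hV => ?_
  obtain ⟨hV, haV, hbV, hSV⟩ := hF a b V hV
  refine mul_pathProd_sum_eq_zero hD hF t b V hV hbV hSV fun x hx => ?_
  have := hl hx
  simp only [List.toFinset_cons, mem_union, mem_insert, List.mem_toFinset] at this ⊢
  grind

end Overlap

theorem sum_pair_mem_eq_sum_superset_add [Fintype α] [DecidableEq α] [AddCommMonoid R]
    (D : Finset α → R) {S : Finset α} {i j : α} (hi : i ∈ S) (hj : j ∈ S) :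
    ∑ V ∈ univ.filter (fun V : Finset α => 2 ≤ #V ∧ i ∈ V ∧ j ∈ V), D V =
      ∑ V ∈ univ.filter (fun V : Finset α => 2 ≤ #V ∧ S ⊆ V), D V +
      ∑ V ∈ univ.filter (fun V : Finset α => 2 ≤ #V ∧ i ∈ V ∧ j ∈ V ∧ ¬ S ⊆ V), D V := by
  rw [← sum_filter_add_sum_filter_not _ (fun V => S ⊆ V), filter_filter, filter_filter]
  congr 2 <;> ext V <;> simp only [mem_filter, mem_univ, true_and] <;> grind

end General

theorem relation_cS_general (n : ℕ) (R : Type*) [CommRing R]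
    (D : Finset (Fin n) → R) (c : Fin n → Fin n → Polynomial R)
    (h1 : ∀ S T : Finset (Fin n), 2 ≤ S.card → 2 ≤ T.card →
      S ∩ T ≠ ∅ → S ∩ T ≠ S → S ∩ T ≠ T → D S * D T = 0)
    (h3 : ∀ i j : Fin n, i ≠ j →
      (c i j).eval (∑ V ∈ univ.filter
        (fun V : Finset (Fin n) => 2 ≤ V.card ∧ i ∈ V ∧ j ∈ V), D V) = 0)
    (S : Finset (Fin n)) (hS : 2 ≤ S.card)
    (l : List (Fin n)) (hnd : l.Nodup) (hl : l.toFinset = S) :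
    ((l.zip l.tail).map (fun p => (c p.1 p.2).eval
      (∑ V ∈ univ.filter
        (fun V : Finset (Fin n) => 2 ≤ V.card ∧ S ⊆ V), D V))).prod = 0 := by
  set x := ∑ V ∈ univ.filter (fun V : Finset (Fin n) => 2 ≤ V.card ∧ S ⊆ V), D V
  set e : Fin n → Fin n → R := fun i j =>
    ∑ V ∈ univ.filter (fun V : Finset (Fin n) => 2 ≤ #V ∧ i ∈ V ∧ j ∈ V ∧ ¬ S ⊆ V), D V
  have he_dvd : ∀ i ∈ S, ∀ j ∈ S, i ≠ j → e i j ∣ (c i j).eval x := by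
    intro i hi j hj hij
    have := sub_dvd_eval_of_eval_eq_zero (x := x) (h3 i j hij)
    rwa [sum_pair_mem_eq_sum_superset_add D hi hj, add_sub_cancel_left] at this
  have he_zero : pathProd e l = 0 :=
    pathProd_sum_eq_zero h1 (fun i j V hV => by simpa using hV) hS hl.ge
  have hchain : l.IsChain fun i j => e i j ∣ (c i j).eval x :=
    hnd.isChain.imp_of_mem_imp fun i j hi hj hij =>
      he_dvd i (hl ▸ List.mem_toFinset.2 hi) j (hl ▸ List.mem_toFinset.2 hj) hij
  exact zero_dvd_iff.1 (he_zero ▸ pathProd_dvd_pathProd hchain)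

/-- Relations (1) and (3) of Fulton–MacPherson's presentation imply the relation
`c_S(Σ_{S ⊆ V} D_V) = 0` for every `S ⊆ {1,…,n}` with `|S| ≥ 2` and every
enumeration `i₁, …, i_k` of the elements of `S`, where
`c_S(t) = ∏_{m=1}^{k−1} c_{i_m i_{m+1}}(t)`. -/
theorem relation_cS (n : ℕ) (hn : 2 ≤ n) (R : Type*) [CommRing R]
    (D : Finset (Fin n) → R) (c : Fin n → Fin n → Polynomial R)
    (hsym : ∀ i j : Fin n, i ≠ j → c i j = c j i)
    (h1 : ∀ S T : Finset (Fin n), 2 ≤ S.card → 2 ≤ T.card →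
      S ∩ T ≠ ∅ → S ∩ T ≠ S → S ∩ T ≠ T → D S * D T = 0)
    (h3 : ∀ i j : Fin n, i ≠ j →
      (c i j).eval (∑ V ∈ univ.filter
        (fun V : Finset (Fin n) => 2 ≤ V.card ∧ i ∈ V ∧ j ∈ V), D V) = 0)
    (S : Finset (Fin n)) (hS : 2 ≤ S.card)
    (l : List (Fin n)) (hnd : l.Nodup) (hl : l.toFinset = S) :
    ((l.zip l.tail).map (fun p => (c p.1 p.2).eval
      (∑ V ∈ univ.filter
        (fun V : Finset (Fin n) => 2 ≤ V.card ∧ S ⊆ V), D V))).prod = 0 :=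
  relation_cS_general n R D c h1 h3 S hS l hnd hl
end

section
/- With the setup of the context (commutative ring R, elements D_S for all S ⊆ {1,…,n} with |S| ≥ 2 satisfying relation (1), polynomials c_{ij} ∈ R[t] satisfying relation (3)): let T, W ⊆ {1,…,n} with T ⊆ W and |W| ≥ 2, let j ∈ {1,…,n} with j ∉ W, and let i ∈ T. Then D_W · c_{ij}(Σ_{V ⊇ T ∪ {j}} D_V) = 0 in R, where the sum runs over all subsets V ⊆ {1,…,n} with |V| ≥ 2 containing T ∪ {j}. -/
open Finset Polynomial

/-
Every `V` that contains `i` and `j` but not all of `T ∪ {j}` overlaps `W`: it meets `W` in `i`,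
it is not contained in `W` because of `j`, and it does not contain `W ⊇ T`. So `D_W` kills
`A - B`, where `A = Σ_{i,j ∈ V} D_V` and `B = Σ_{T ∪ {j} ⊆ V} D_V`. Since `A - B` divides
`c(A) - c(B)`, we get `D_W · c_{ij}(B) = D_W · c_{ij}(A) = 0` by relation (3).
-/

theorem Polynomial.mul_eval_eq_of_mul_sub_eq_zero {R : Type*} [CommRing R] (p : R[X])
    {a x y : R} (h : a * (x - y) = 0) : a * p.eval x = a * p.eval y := by
  obtain ⟨q, hq⟩ := sub_dvd_eval_sub x y p
  rw [← sub_eq_zero, ← mul_sub, hq, ← mul_assoc, h, zero_mul]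

section

variable {α : Type*} [DecidableEq α] {T W V : Finset α} {i j : α}

theorem inter_ne_empty_ne_left_ne_right_of_not_insert_subset (hTW : T ⊆ W) (hiW : i ∈ W)
    (hj : j ∉ W) (hiV : i ∈ V) (hjV : j ∈ V) (hV : ¬insert j T ⊆ V) :
    W ∩ V ≠ ∅ ∧ W ∩ V ≠ W ∧ W ∩ V ≠ V := by
  refine ⟨ne_empty_of_mem (mem_inter.mpr ⟨hiW, hiV⟩), fun h => hV ?_, fun h => hj ?_⟩
  · exact insert_subset hjV (hTW.trans (inter_eq_left.mp h))
  · exact inter_eq_right.mp h hjV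

variable [Fintype α] {R : Type*} [CommRing R]

theorem filter_insert_subset_subset_filter_mem_mem (hi : i ∈ T) :
    univ.filter (fun V : Finset α => 2 ≤ V.card ∧ insert j T ⊆ V) ⊆
      univ.filter (fun V : Finset α => 2 ≤ V.card ∧ i ∈ V ∧ j ∈ V) := by
  intro V hV
  simp only [mem_filter, mem_univ, true_and] at hV ⊢
  exact ⟨hV.1, hV.2 (mem_insert_of_mem hi), hV.2 (mem_insert_self _ _)⟩

theorem mul_sum_mem_mem_sub_sum_insert_subset_eq_zero (D : Finset α → R)
    (h1 : ∀ S T : Finset α, 2 ≤ S.card → 2 ≤ T.card →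
      S ∩ T ≠ ∅ → S ∩ T ≠ S → S ∩ T ≠ T → D S * D T = 0)
    (hTW : T ⊆ W) (hW : 2 ≤ W.card) (hj : j ∉ W) (hi : i ∈ T) :
    D W * (∑ V ∈ univ.filter (fun V : Finset α => 2 ≤ V.card ∧ i ∈ V ∧ j ∈ V), D V -
      ∑ V ∈ univ.filter (fun V : Finset α => 2 ≤ V.card ∧ insert j T ⊆ V), D V) = 0 := by
  rw [← sum_sdiff_eq_sub (filter_insert_subset_subset_filter_mem_mem hi), mul_sum]
  refine sum_eq_zero fun V hV => ?_
  simp only [mem_sdiff, mem_filter, mem_univ, true_and, not_and] at hV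
  obtain ⟨⟨hVc, hiV, hjV⟩, hV⟩ := hV
  obtain ⟨hne, hneW, hneV⟩ := inter_ne_empty_ne_left_ne_right_of_not_insert_subset
    hTW (hTW hi) hj hiV hjV (hV hVc)
  exact h1 W V hW hVc hne hneW hneV

end

theorem key_induction_step_general (n : ℕ) (R : Type*) [CommRing R]
    (D : Finset (Fin n) → R) (c : Fin n → Fin n → Polynomial R)
    (h1 : ∀ S T : Finset (Fin n), 2 ≤ S.card → 2 ≤ T.card →
      S ∩ T ≠ ∅ → S ∩ T ≠ S → S ∩ T ≠ T → D S * D T = 0)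
    (h3 : ∀ i j : Fin n, i ≠ j →
      (c i j).eval (∑ V ∈ univ.filter
        (fun V : Finset (Fin n) => 2 ≤ V.card ∧ i ∈ V ∧ j ∈ V), D V) = 0)
    (T W : Finset (Fin n)) (hTW : T ⊆ W) (hW : 2 ≤ W.card)
    (j : Fin n) (hj : j ∉ W) (i : Fin n) (hi : i ∈ T) :
    D W * (c i j).eval (∑ V ∈ univ.filter
      (fun V : Finset (Fin n) => 2 ≤ V.card ∧ insert j T ⊆ V), D V) = 0 := by
  have hij : i ≠ j := fun h => hj (h ▸ hTW hi)
  rw [← (c i j).mul_eval_eq_of_mul_sub_eq_zero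
    (mul_sum_mem_mem_sub_sum_insert_subset_eq_zero D h1 hTW hW hj hi), h3 i j hij, mul_zero]

/-- The key step in the induction proving Fulton–MacPherson's presentation of
`A^•(X[n])`: if `T ⊆ W`, `|W| ≥ 2`, `j ∉ W` and `i ∈ T`, then
`D_W · c_{ij}(Σ_{T ∪ {j} ⊆ V} D_V) = 0`. -/
theorem key_induction_step (n : ℕ) (hn : 2 ≤ n) (R : Type*) [CommRing R]
    (D : Finset (Fin n) → R) (c : Fin n → Fin n → Polynomial R)
    (hsym : ∀ i j : Fin n, i ≠ j → c i j = c j i)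
    (h1 : ∀ S T : Finset (Fin n), 2 ≤ S.card → 2 ≤ T.card →
      S ∩ T ≠ ∅ → S ∩ T ≠ S → S ∩ T ≠ T → D S * D T = 0)
    (h3 : ∀ i j : Fin n, i ≠ j →
      (c i j).eval (∑ V ∈ univ.filter
        (fun V : Finset (Fin n) => 2 ≤ V.card ∧ i ∈ V ∧ j ∈ V), D V) = 0)
    (T W : Finset (Fin n)) (hTW : T ⊆ W) (hW : 2 ≤ W.card)
    (j : Fin n) (hj : j ∉ W) (i : Fin n) (hi : i ∈ T) :
    D W * (c i j).eval (∑ V ∈ univ.filter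
      (fun V : Finset (Fin n) => 2 ≤ V.card ∧ insert j T ⊆ V), D V) = 0 :=
  key_induction_step_general n R D c h1 h3 T W hTW hW j hj i hi
end

section
/- Let n ≥ 2, let A be a commutative ring, let J_S ⊆ A be an ideal for every subset S ⊆ {1,…,n} with |S| ≥ 2, and let c_{ij} ∈ A[t] be a polynomial for every pair of distinct i, j ∈ {1,…,n} with c_{ij} = c_{ji}. In the polynomial ring P = A[D_S : S ⊆ {1,…,n}, |S| ≥ 2], consider the following families of elements: (1) D_S·D_T for all overlapping pairs S, T; (2) a·D_S for all S and all a ∈ J_S; (3) c_{ij}(Σ_{V ∋ i,j} D_V) for all i ≠ j, the sum over all V with |V| ≥ 2 containing i and j; (3') ∏_{m=1}^{k−1} c_{i_m i_{m+1}}(Σ_{V ⊇ S} D_V) for every S with |S| = k ≥ 2 and every enumeration i₁,…,i_k of S, the sum over all V with |V| ≥ 2 containing S; (4) D_S · ∏_{m=1}^{k−1} c_{i_m i_{m+1}}(Σ_{V ⊇ S∪S'} D_V) for all S, S' with |S| ≥ 2, |S'| ≥ 2, |S ∩ S'| = 1, and every enumeration i₁,…,i_k of S'. Then the ideal of P generated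 by the families (1), (2), (3), (3'), (4) is equal to the ideal of P generated by the families (1), (2), (3) alone. -/
open Finset

/-- The index type: subsets `S ⊆ {1,…,n}` with `|S| ≥ 2`. -/
abbrev FMIdx (n : ℕ) := {S : Finset (Fin n) // 2 ≤ S.card}

noncomputable section

/-- The sum `Σ_{W ⊆ V} D_V` in the polynomial ring `A[D_S : |S| ≥ 2]`, the sum
running over all `V ⊆ {1,…,n}` with `|V| ≥ 2` containing `W`. -/
def sumOver (n : ℕ) (A : Type*) [CommRing A] (W : Finset (Fin n)) :
    MvPolynomial (FMIdx n) A :=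
  ∑ V ∈ univ.filter (fun V : FMIdx n => W ⊆ V.1), MvPolynomial.X V

/-- Family (1): `D_S · D_T` for all overlapping pairs `S, T`. -/
def fam1 (n : ℕ) (A : Type*) [CommRing A] : Set (MvPolynomial (FMIdx n) A) :=
  {p | ∃ (S T : Finset (Fin n)) (hS : 2 ≤ S.card) (hT : 2 ≤ T.card),
    S ∩ T ≠ ∅ ∧ S ∩ T ≠ S ∧ S ∩ T ≠ T ∧
    p = MvPolynomial.X ⟨S, hS⟩ * MvPolynomial.X ⟨T, hT⟩}

/-- Family (2): `a · D_S` for all `S` with `|S| ≥ 2` and all `a ∈ J_S`. -/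
def fam2 (n : ℕ) (A : Type*) [CommRing A] (J : Finset (Fin n) → Ideal A) :
    Set (MvPolynomial (FMIdx n) A) :=
  {p | ∃ (S : Finset (Fin n)) (hS : 2 ≤ S.card), ∃ a ∈ J S,
    p = MvPolynomial.C a * MvPolynomial.X ⟨S, hS⟩}

/-- Family (3): `c_{ij}(Σ_{i,j ∈ V} D_V)` for all `i ≠ j`. -/
def fam3 (n : ℕ) (A : Type*) [CommRing A] (c : Fin n → Fin n → Polynomial A) :
    Set (MvPolynomial (FMIdx n) A) :=
  {p | ∃ i j : Fin n, i ≠ j ∧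
    p = Polynomial.aeval
      (∑ V ∈ univ.filter (fun V : FMIdx n => i ∈ V.1 ∧ j ∈ V.1), MvPolynomial.X V)
      (c i j)}

/-- Family (3'): `∏_{m=1}^{k−1} c_{i_m i_{m+1}}(Σ_{S ⊆ V} D_V)` for every `S` with
`|S| = k ≥ 2` and every enumeration `i₁,…,i_k` of `S`. -/
def fam3' (n : ℕ) (A : Type*) [CommRing A] (c : Fin n → Fin n → Polynomial A) :
    Set (MvPolynomial (FMIdx n) A) :=
  {p | ∃ l : List (Fin n), l.Nodup ∧ 2 ≤ l.length ∧
    p = ((l.zip l.tail).map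
      (fun q => Polynomial.aeval (sumOver n A l.toFinset) (c q.1 q.2))).prod}

/-- Family (4): `D_S · ∏_{m=1}^{k−1} c_{i_m i_{m+1}}(Σ_{S ∪ S' ⊆ V} D_V)` for all
`S, S'` with `|S| ≥ 2`, `|S'| ≥ 2`, `|S ∩ S'| = 1`, and every enumeration
`i₁,…,i_k` of `S'`. -/
def fam4 (n : ℕ) (A : Type*) [CommRing A] (c : Fin n → Fin n → Polynomial A) :
    Set (MvPolynomial (FMIdx n) A) :=
  {p | ∃ (S : Finset (Fin n)) (hS : 2 ≤ S.card) (l : List (Fin n)),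
    l.Nodup ∧ 2 ≤ l.length ∧ (S ∩ l.toFinset).card = 1 ∧
    p = MvPolynomial.X ⟨S, hS⟩ * ((l.zip l.tail).map
      (fun q => Polynomial.aeval (sumOver n A (S ∪ l.toFinset)) (c q.1 q.2))).prod}

/-!
For `i, j ∈ W`, the sum `Σ_{i,j ∈ V} D_V` splits as `Σ_{W ⊆ V} D_V + E_W(i, j)`, where
`E_W(i, j)` collects the `D_V` with `i, j ∈ V` and `W ⊄ V`. Hence, modulo relation (3),
`c_{ij}(Σ_{W ⊆ V} D_V)` is a multiple of `E_W(i, j)`, and the product along an enumeration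
`i₁, …, i_k` is a multiple of `∏ E_W(i_m, i_{m+1})`. Two consecutive factors share the vertex
`i_{m+1}`, so each product `D_V D_M` of their terms is either a relation (1) or has `V, M`
nested; by induction along the path, `∏ E_W(i_m, i_{m+1})` lies in the ideal generated by (1)
and the `D_V` with `{i₁, …, i_k} ⊆ V`, `W ⊄ V`. For (3') there are no such `V`; for (4), `D_S`
times such a `D_V` is again a relation (1).
-/

theorem List.Nodup.ne_of_mem_zip_tail {α : Type*} {l : List α} (hnd : l.Nodup) {q : α × α}
    (hq : q ∈ l.zip l.tail) : q.1 ≠ q.2 := by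
  obtain ⟨k, hk, rfl⟩ := List.getElem_of_mem hq
  simp only [List.getElem_zip, List.getElem_tail, ne_eq, hnd.getElem_inj_iff]
  omega

theorem Polynomial.sub_dvd_aeval_sub {R S : Type*} [CommRing R] [CommRing S] [Algebra R S]
    (p : Polynomial R) (x y : S) : x - y ∣ aeval x p - aeval y p := by
  rw [aeval_def, aeval_def, eval₂_eq_eval_map, eval₂_eq_eval_map]
  exact sub_dvd_eval_sub x y _

namespace Ideal

variable {R : Type*} [CommRing R]

theorem mk_dvd_mk_aeval_sub {A : Type*} [CommRing A] [Algebra A R] {I : Ideal R}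
    {p : Polynomial A} {x : R} (hx : Polynomial.aeval x p ∈ I) (y : R) :
    Quotient.mk I y ∣ Quotient.mk I (Polynomial.aeval (x - y) p) := by
  have h := map_dvd (Quotient.mk I) (p.sub_dvd_aeval_sub x (x - y))
  rwa [sub_sub_cancel, map_sub, Quotient.eq_zero_iff_mem.2 hx, zero_sub, dvd_neg] at h

theorem mul_mem_of_mk_dvd_mk {I : Ideal R} {a e x : R}
    (hex : Quotient.mk I e ∣ Quotient.mk I x) (hae : a * e ∈ I) : a * x ∈ I := by
  rw [← Quotient.eq_zero_iff_mem, map_mul, ← zero_dvd_iff]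
  rw [← Quotient.eq_zero_iff_mem, map_mul] at hae
  exact hae ▸ mul_dvd_mul_left _ hex

theorem mul_mem_of_mem_span {s : Set R} {J : Ideal R} {y x : R}
    (h : ∀ g ∈ s, y * g ∈ J) (hx : x ∈ span s) : y * x ∈ J := by
  have hle : span s ≤ J.colon {y} := span_le.2 fun g hg =>
    Submodule.mem_colon_singleton.2 (by simpa [mul_comm] using h g hg)
  simpa [mul_comm] using Submodule.mem_colon_singleton.1 (hle hx)

end Ideal

section ExcessRelations

open MvPolynomial

variable {n : ℕ} {A : Type*} [CommRing A]

variable (A) in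
def sumPairNotSuperset (W : Finset (Fin n)) (i j : Fin n) : MvPolynomial (FMIdx n) A :=
  ∑ V ∈ univ.filter (fun V : FMIdx n => (i ∈ V.1 ∧ j ∈ V.1) ∧ ¬ W ⊆ V.1), X V

theorem sum_pair_eq_sumOver_add {W : Finset (Fin n)} {i j : Fin n} (hi : i ∈ W) (hj : j ∈ W) :
    ∑ V ∈ univ.filter (fun V : FMIdx n => i ∈ V.1 ∧ j ∈ V.1), (X V : MvPolynomial _ A) =
      sumOver n A W + sumPairNotSuperset A W i j := by
  rw [sumOver, sumPairNotSuperset, ← sum_filter_add_sum_filter_not _ (fun V => W ⊆ V.1),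
    filter_filter, filter_filter]
  congr 2
  ext V
  simpa using fun h : W ⊆ V.1 => ⟨h hi, h hj⟩

theorem mk_prod_sumPairNotSuperset_dvd {I : Ideal (MvPolynomial (FMIdx n) A)}
    {c : Fin n → Fin n → Polynomial A} (hI : fam3 n A c ⊆ I) {W : Finset (Fin n)}
    {l : List (Fin n)} (hnd : l.Nodup) (hW : l.toFinset ⊆ W) :
    Ideal.Quotient.mk I ((l.zip l.tail).map (fun q => sumPairNotSuperset A W q.1 q.2)).prod ∣
      Ideal.Quotient.mk I
        ((l.zip l.tail).map (fun q => Polynomial.aeval (sumOver n A W) (c q.1 q.2))).prod := by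
  simp only [map_list_prod, List.map_map]
  rw [← Multiset.prod_coe, ← Multiset.prod_coe, ← Multiset.map_coe, ← Multiset.map_coe]
  refine Multiset.prod_dvd_prod_of_dvd _ _ fun q hq => ?_
  obtain ⟨hq₁, hq₂⟩ := List.of_mem_zip hq
  have hi : q.1 ∈ W := hW (List.mem_toFinset.2 hq₁)
  have hj : q.2 ∈ W := hW (List.mem_toFinset.2 (List.mem_of_mem_tail hq₂))
  have h := Ideal.mk_dvd_mk_aeval_sub (hI ⟨q.1, q.2, hnd.ne_of_mem_zip_tail hq, rfl⟩)
    (sumPairNotSuperset A W q.1 q.2)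
  rwa [sum_pair_eq_sumOver_add hi hj, add_sub_cancel_right] at h

variable (A) in
def pathIdeal (W T : Finset (Fin n)) : Ideal (MvPolynomial (FMIdx n) A) :=
  Ideal.span (fam1 n A ∪ {p | ∃ V : FMIdx n, T ⊆ V.1 ∧ ¬ W ⊆ V.1 ∧ p = X V})

theorem X_mul_X_mem_span_fam1 {V M : FMIdx n} (h : (V.1 ∩ M.1).Nonempty)
    (hVM : ¬ V.1 ⊆ M.1) (hMV : ¬ M.1 ⊆ V.1) : X V * X M ∈ Ideal.span (fam1 n A) :=
  Ideal.subset_span ⟨V.1, M.1, V.2, M.2, h.ne_empty, mt inter_eq_left.1 hVM,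
    mt inter_eq_right.1 hMV, rfl⟩

theorem X_mul_mem_pathIdeal {W T : Finset (Fin n)} {a b : Fin n} {V : FMIdx n}
    (haV : a ∈ V.1) (hbV : b ∈ V.1) (hWV : ¬ W ⊆ V.1) (hb : b ∈ T) {x : MvPolynomial _ A}
    (hx : x ∈ pathIdeal A W T) : X V * x ∈ pathIdeal A W (insert a T) := by
  refine Ideal.mul_mem_of_mem_span ?_ hx
  rintro _ (hg | ⟨M, hTM, hWM, rfl⟩)
  · exact Ideal.mul_mem_left _ _ (Ideal.subset_span (Or.inl hg))
  by_cases hVM : V.1 ⊆ M.1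
  · exact Ideal.mul_mem_left _ _
      (Ideal.subset_span (Or.inr ⟨M, insert_subset (hVM haV) hTM, hWM, rfl⟩))
  by_cases hMV : M.1 ⊆ V.1
  · exact Ideal.mul_mem_right _ _
      (Ideal.subset_span (Or.inr ⟨V, insert_subset haV (hTM.trans hMV), hWV, rfl⟩))
  exact Ideal.span_mono Set.subset_union_left
    (X_mul_X_mem_span_fam1 ⟨b, mem_inter.2 ⟨hbV, hTM hb⟩⟩ hVM hMV)

theorem sumPairNotSuperset_mul_mem_pathIdeal {W T : Finset (Fin n)} {a b : Fin n}
    (hb : b ∈ T) {x : MvPolynomial _ A} (hx : x ∈ pathIdeal A W T) :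
    sumPairNotSuperset A W a b * x ∈ pathIdeal A W (insert a T) := by
  rw [sumPairNotSuperset, sum_mul]
  refine Ideal.sum_mem _ fun V hV => ?_
  obtain ⟨⟨haV, hbV⟩, hWV⟩ := (mem_filter.1 hV).2
  exact X_mul_mem_pathIdeal haV hbV hWV hb hx

theorem prod_sumPairNotSuperset_mem_pathIdeal (W : Finset (Fin n)) :
    ∀ l : List (Fin n), 2 ≤ l.length →
      ((l.zip l.tail).map (fun q => sumPairNotSuperset A W q.1 q.2)).prod ∈
        pathIdeal A W l.toFinset
  | [], h | [_], h => by simp at h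
  | [a, b], _ => by
    suffices sumPairNotSuperset A W a b ∈ pathIdeal A W {a, b} by simpa
    refine Ideal.sum_mem _ fun V hV => ?_
    obtain ⟨⟨haV, hbV⟩, hWV⟩ := (mem_filter.1 hV).2
    exact Ideal.subset_span
      (Or.inr ⟨V, insert_subset haV (singleton_subset_iff.2 hbV), hWV, rfl⟩)
  | a :: b :: d :: t, _ => by
    have ih := prod_sumPairNotSuperset_mem_pathIdeal W (b :: d :: t) (by simp)
    simpa using sumPairNotSuperset_mul_mem_pathIdeal (a := a) (by simp) ih

theorem pathIdeal_le_span_fam1 {W T : Finset (Fin n)} (h : W ⊆ T) :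
    pathIdeal A W T ≤ Ideal.span (fam1 n A) := by
  refine Ideal.span_le.2 ?_
  rintro _ (hg | ⟨V, hTV, hWV, rfl⟩)
  · exact Ideal.subset_span hg
  · exact absurd (h.trans hTV) hWV

theorem X_mul_mem_span_fam1_of_mem_pathIdeal {S T : Finset (Fin n)} (hS : 2 ≤ S.card)
    (hST : (S ∩ T).card = 1) (hT : 2 ≤ T.card) {x : MvPolynomial _ A}
    (hx : x ∈ pathIdeal A (S ∪ T) T) : X ⟨S, hS⟩ * x ∈ Ideal.span (fam1 n A) := by
  refine Ideal.mul_mem_of_mem_span ?_ hx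
  rintro _ (hg | ⟨M, hTM, hWM, rfl⟩)
  · exact Ideal.mul_mem_left _ _ (Ideal.subset_span hg)
  obtain ⟨i, hi⟩ := card_eq_one.1 hST
  have hiST := mem_inter.1 (hi ▸ mem_singleton_self i)
  refine X_mul_X_mem_span_fam1 ⟨i, mem_inter.2 ⟨hiST.1, hTM hiST.2⟩⟩
    (fun hSM => hWM (union_subset hSM hTM)) fun hMS => ?_
  rw [inter_eq_right.2 (hTM.trans hMS)] at hST
  omega

end ExcessRelations

theorem excess_relations_redundant_general (n : ℕ) (A : Type*) [CommRing A]
    (J : Finset (Fin n) → Ideal A) (c : Fin n → Fin n → Polynomial A) :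
    Ideal.span (fam1 n A ∪ fam2 n A J ∪ fam3 n A c ∪ fam3' n A c ∪ fam4 n A c) =
      Ideal.span (fam1 n A ∪ fam2 n A J ∪ fam3 n A c) := by
  set I := Ideal.span (fam1 n A ∪ fam2 n A J ∪ fam3 n A c)
  have h1 : Ideal.span (fam1 n A) ≤ I := Ideal.span_mono fun _ h => Or.inl (Or.inl h)
  have h3 : fam3 n A c ⊆ I := fun _ h => Ideal.subset_span (Or.inr h)
  refine le_antisymm (Ideal.span_le.2 ?_) (Ideal.span_mono fun _ h => Or.inl (Or.inl h))
  rintro _ ((hp | ⟨l, hnd, hlen, rfl⟩) | ⟨S, hS, l, hnd, hlen, hST, rfl⟩)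
  · exact Ideal.subset_span hp
  · have hE := pathIdeal_le_span_fam1 subset_rfl
      (prod_sumPairNotSuperset_mem_pathIdeal (A := A) _ l hlen)
    simpa using Ideal.mul_mem_of_mk_dvd_mk (a := 1)
      (mk_prod_sumPairNotSuperset_dvd h3 hnd subset_rfl) (by simpa using h1 hE)
  · have hT : 2 ≤ l.toFinset.card := by rwa [List.toFinset_card_of_nodup hnd]
    refine Ideal.mul_mem_of_mk_dvd_mk (mk_prod_sumPairNotSuperset_dvd h3 hnd subset_union_right)
      (h1 ?_)
    exact X_mul_mem_span_fam1_of_mem_pathIdeal hS hST hT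
      (prod_sumPairNotSuperset_mem_pathIdeal (A := A) _ l hlen)

/-- Simplification of Routis's presentation to Fulton–MacPherson's original one:
in `P = A[D_S : S ⊆ {1,…,n}, |S| ≥ 2]`, the ideal generated by the families
(1), (2), (3), (3'), (4) equals the ideal generated by (1), (2), (3) alone. -/
theorem excess_relations_redundant (n : ℕ) (hn : 2 ≤ n) (A : Type*) [CommRing A]
    (J : Finset (Fin n) → Ideal A) (c : Fin n → Fin n → Polynomial A)
    (hsym : ∀ i j : Fin n, i ≠ j → c i j = c j i) :
    Ideal.span (fam1 n A ∪ fam2 n A J ∪ fam3 n A c ∪ fam3' n A c ∪ fam4 n A c) =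
      Ideal.span (fam1 n A ∪ fam2 n A J ∪ fam3 n A c) :=
  excess_relations_redundant_general n A J c

end
end
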